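/- arXiv:1309.6899 — 3 statements merged into one kernel-verified Lean document; each statement's English description precedes it below -/
import Mathlib

section
/- Let s : Λ → ℝ, Λ := [-1,1]², be any function of the form s(x,y) = c₀(y) + c₁(y)·x + c₂(y)·x², where each coefficient function c_k : [-1,1] → ℝ is continuously differentiable and restricts to a polynomial of degree at most 2 on [-1,0] and on [0,1]. Then ‖∂_x² s‖_{L²(Λ)} ≤ √3 · ‖∂_x s‖_{L²(Λ)}, where ∂_x² s is taken piecewise on the interiors of [-1,1]×[-1,0] and [-1,1]×[0,1]. -/
/-!
Only the `x`-dependence matters: `∂ₓ s = c₁(y) + 2 c₂(y) x` is affine in `x` on every horizontal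
line and `∂ₓ² s = 2 c₂(y)` is its slope. For an affine function `a + b x` on `[-1, 1]`,
`∫ b² = 2 b² ≤ 3 (2 a² + 2 b² / 3) = 3 ∫ (a + b x)²`, and Tonelli integrates this fibrewise
inequality over `y ∈ [-1, 1]`.
-/

open MeasureTheory
open scoped ENNReal

/-- Partial derivative in the first (`x`) coordinate. -/
noncomputable def pdx (f : ℝ × ℝ → ℝ) : ℝ × ℝ → ℝ := fun q => deriv (fun t => f (t, q.2)) q.1

/-- Partial derivative in the second (`y`) coordinate. -/
noncomputable def pdy (f : ℝ × ℝ → ℝ) : ℝ × ℝ → ℝ := fun q => deriv (fun t => f (q.1, t)) q.2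

/-- `Dm (α₁, α₂) f = ∂_x^{α₁} ∂_y^{α₂} f`. -/
noncomputable def Dm (a : ℕ × ℕ) (f : ℝ × ℝ → ℝ) : ℝ × ℝ → ℝ := pdx^[a.1] (pdy^[a.2] f)

/-- The `L^p` norm over a set `R ⊆ ℝ²` (with respect to Lebesgue measure). -/
noncomputable def LpN (p : ℝ≥0∞) (R : Set (ℝ × ℝ)) (f : ℝ × ℝ → ℝ) : ℝ≥0∞ :=
  eLpNorm f p (volume.restrict R)

/-- The reference square `Λ := [-1,1]²`. -/
def Lam : Set (ℝ × ℝ) := Set.Icc (-1, -1) (1, 1)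

open Set

lemma pdx_quadratic (a b d : ℝ → ℝ) :
    pdx (fun z : ℝ × ℝ => a z.2 + b z.2 * z.1 + d z.2 * z.1 ^ 2) =
      fun z => b z.2 + 2 * d z.2 * z.1 := by
  funext z
  refine (((((hasDerivAt_id z.1).const_mul (b z.2)).const_add (a z.2)).add
    ((hasDerivAt_pow 2 z.1).const_mul (d z.2)))).deriv.trans ?_
  simp only [mul_one, Nat.cast_ofNat]
  ring

lemma pdx_affine (a b : ℝ → ℝ) :
    pdx (fun z : ℝ × ℝ => a z.2 + b z.2 * z.1) = fun z => b z.2 := by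
  funext z
  exact ((((hasDerivAt_id z.1).const_mul (b z.2)).const_add (a z.2))).deriv.trans (mul_one _)

lemma LpN_two_eq_lintegral_sq (R : Set (ℝ × ℝ)) (f : ℝ × ℝ → ℝ) :
    LpN 2 R f = (∫⁻ z in R, ENNReal.ofReal (f z ^ 2)) ^ (1 / 2 : ℝ) := by
  rw [LpN, eLpNorm_eq_lintegral_rpow_enorm_toReal two_ne_zero ENNReal.ofNat_ne_top,
    ENNReal.toReal_ofNat, one_div]
  congr 2 with z
  rw [ENNReal.rpow_two, ← ofReal_norm, ← ENNReal.ofReal_pow (norm_nonneg _), Real.norm_eq_abs,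
    sq_abs]

lemma integral_sq_affine_neg_one_one (a b : ℝ) :
    ∫ x in (-1 : ℝ)..1, (a + b * x) ^ 2 = 2 * a ^ 2 + 2 / 3 * b ^ 2 := by
  have hexpand : ∀ x : ℝ, (a + b * x) ^ 2 = a ^ 2 + 2 * a * b * x ^ 1 + b ^ 2 * x ^ 2 :=
    fun x => by ring
  simp_rw [hexpand]
  rw [intervalIntegral.integral_add, intervalIntegral.integral_add] <;>
    try exact Continuous.intervalIntegrable (by fun_prop) _ _
  simp only [intervalIntegral.integral_const, intervalIntegral.integral_const_mul, integral_pow]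
  norm_num
  ring

lemma lintegral_sq_slope_le (a b : ℝ) :
    ∫⁻ _ in Icc (-1 : ℝ) 1, ENNReal.ofReal (b ^ 2) ≤
      ENNReal.ofReal 3 * ∫⁻ x in Icc (-1 : ℝ) 1, ENNReal.ofReal ((a + b * x) ^ 2) := by
  have hslope : ∫⁻ _ in Icc (-1 : ℝ) 1, ENNReal.ofReal (b ^ 2) = ENNReal.ofReal (2 * b ^ 2) := by
    rw [setLIntegral_const, Real.volume_Icc, ← ENNReal.ofReal_mul (sq_nonneg b)]
    norm_num [mul_comm]
  have haffine : ∫⁻ x in Icc (-1 : ℝ) 1, ENNReal.ofReal ((a + b * x) ^ 2) =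
      ENNReal.ofReal (2 * a ^ 2 + 2 / 3 * b ^ 2) := by
    rw [← ofReal_integral_eq_lintegral_ofReal
        (Continuous.integrableOn_Icc (by fun_prop)) (.of_forall fun x => sq_nonneg _),
      integral_Icc_eq_integral_Ioc, ← intervalIntegral.integral_of_le (by norm_num),
      integral_sq_affine_neg_one_one]
  rw [hslope, haffine, ← ENNReal.ofReal_mul (by norm_num)]
  exact ENNReal.ofReal_le_ofReal (by nlinarith [sq_nonneg a])

section Tonelli

variable {α β : Type*} [MeasurableSpace α] [MeasurableSpace β] {μ : Measure α} {ν : Measure β}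
  [SFinite μ] [SFinite ν]

lemma lintegral_prod_le_mul_of_forall_lintegral_le {F G : α × β → ℝ≥0∞}
    (hG : AEMeasurable G (μ.prod ν)) (C : ℝ≥0∞)
    (h : ∀ y, ∫⁻ x, F (x, y) ∂μ ≤ C * ∫⁻ x, G (x, y) ∂μ) :
    ∫⁻ z, F z ∂μ.prod ν ≤ C * ∫⁻ z, G z ∂μ.prod ν :=
  calc ∫⁻ z, F z ∂μ.prod ν = ∫⁻ z, F z.swap ∂ν.prod μ := (lintegral_prod_swap F).symm
    _ ≤ ∫⁻ y, ∫⁻ x, F (x, y) ∂μ ∂ν := lintegral_prod_le _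
    _ ≤ ∫⁻ y, C * ∫⁻ x, G (x, y) ∂μ ∂ν := lintegral_mono h
    _ = C * ∫⁻ z, G z ∂μ.prod ν := by
      rw [lintegral_const_mul'' C hG.lintegral_prod_left', lintegral_prod_symm G hG]

end Tonelli

lemma volume_restrict_Lam :
    volume.restrict Lam =
      (volume.restrict (Icc (-1 : ℝ) 1)).prod (volume.restrict (Icc (-1 : ℝ) 1)) := by
  rw [Lam, ← Icc_prod_Icc, Measure.prod_restrict, Measure.volume_eq_prod]

lemma ENNReal.rpow_half_le_sqrt_mul {a b : ℝ≥0∞} {c : ℝ} (hc : 0 ≤ c)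
    (h : a ≤ ENNReal.ofReal c * b) :
    a ^ (1 / 2 : ℝ) ≤ ENNReal.ofReal (Real.sqrt c) * b ^ (1 / 2 : ℝ) :=
  calc a ^ (1 / 2 : ℝ) ≤ (ENNReal.ofReal c * b) ^ (1 / 2 : ℝ) :=
        ENNReal.rpow_le_rpow h (by norm_num)
    _ = ENNReal.ofReal (Real.sqrt c) * b ^ (1 / 2 : ℝ) := by
      rw [ENNReal.mul_rpow_of_nonneg _ _ (by norm_num), ENNReal.ofReal_rpow_of_nonneg hc
        (by norm_num), Real.sqrt_eq_rpow]

theorem spline_inverse_estimate_general (c : Fin 3 → ℝ → ℝ)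
    (hc1 : ∀ k, ContDiffOn ℝ 1 (c k) (Set.Icc (-1 : ℝ) 1))
    (s : ℝ × ℝ → ℝ) (hs : s = fun z => c 0 z.2 + c 1 z.2 * z.1 + c 2 z.2 * z.1 ^ 2) :
    LpN 2 Lam (Dm (2, 0) s) ≤ ENNReal.ofReal (Real.sqrt 3) * LpN 2 Lam (Dm (1, 0) s) := by
  have hD1 : Dm (1, 0) s = fun z => c 1 z.2 + 2 * c 2 z.2 * z.1 := hs ▸ pdx_quadratic _ _ _
  have hD2 : Dm (2, 0) s = fun z => 2 * c 2 z.2 := by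
    change pdx (pdx s) = _
    rw [hs, pdx_quadratic]
    exact pdx_affine (c 1) fun y => 2 * c 2 y
  set μ := volume.restrict (Icc (-1 : ℝ) 1)
  have hcoeff : ∀ k, AEMeasurable (fun z : ℝ × ℝ => c k z.2) (μ.prod μ) := fun k =>
    ((hc1 k).continuousOn.aemeasurable measurableSet_Icc).comp_snd
  rw [hD1, hD2, LpN_two_eq_lintegral_sq, LpN_two_eq_lintegral_sq, volume_restrict_Lam]
  refine ENNReal.rpow_half_le_sqrt_mul (by norm_num) <|
    lintegral_prod_le_mul_of_forall_lintegral_le ?_ _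
      fun y => lintegral_sq_slope_le (c 1 y) (2 * c 2 y)
  exact ((hcoeff 1).add (((hcoeff 2).const_mul 2).mul measurable_fst.aemeasurable)).pow_const
    2 |>.ennreal_ofReal

/-- inverse inequality `‖∂_x² s‖_{L²(Λ)} ≤ √3 ‖∂_x s‖_{L²(Λ)}` for functions
`s(x,y) = c₀(y) + c₁(y)x + c₂(y)x²` whose coefficient functions are `C¹` quadratic
splines on `[-1,1]` with knot `0`. -/
theorem spline_inverse_estimate (c : Fin 3 → ℝ → ℝ)
    (hc1 : ∀ k, ContDiffOn ℝ 1 (c k) (Set.Icc (-1 : ℝ) 1))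
    (hpoly : ∀ k,
      (∃ p : Polynomial ℝ, p.degree ≤ 2 ∧
        Set.EqOn (c k) (fun y => p.eval y) (Set.Icc (-1 : ℝ) 0)) ∧
      (∃ q : Polynomial ℝ, q.degree ≤ 2 ∧
        Set.EqOn (c k) (fun y => q.eval y) (Set.Icc (0 : ℝ) 1)))
    (s : ℝ × ℝ → ℝ) (hs : s = fun z => c 0 z.2 + c 1 z.2 * z.1 + c 2 z.2 * z.1 ^ 2) :
    LpN 2 Lam (Dm (2, 0) s) ≤ ENNReal.ofReal (Real.sqrt 3) * LpN 2 Lam (Dm (1, 0) s) :=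
  spline_inverse_estimate_general c hc1 s hs
end

section
/- There exists a constant C > 0 with the following property. Let M := [x₀-h_x, x₀+h_x] × [y₀-h_y, y₀+h_y] with x₀, y₀ ∈ ℝ and h_x, h_y > 0, and let u : ℝ² → ℝ be of class C¹ on an open neighbourhood of M. Then sup_{(x,y) ∈ M} |Π^yu(x,y)| ≤ C · ( sup_{(x,y) ∈ M} |u(x,y)| + h_y · sup_{(x,y) ∈ M} |∂_y u(x,y)| ). -/
/-!
On the reference square `Λ`, `Π̂ʸ v` is a combination of the twelve nodal values `v(i, j)` and
`∂_y v(i, j)` with coefficients that are products of basis functions bounded by `1`, so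
`|Π̂ʸ v| ≤ 6 (sup_Λ |v| + sup_Λ |∂_y v|)`. For `v = u ∘ F_M` the chain rule gives
`∂_y v = h_y (∂_y u) ∘ F_M`, which is where the factor `h_y` comes from. The `C¹` hypothesis makes
`u` and `∂_y u` continuous on the compact `M`, so that the suprema are genuine (a real `⨆` of an
unbounded family is `0`).
-/

open MeasureTheory
open scoped ENNReal

/-- The spline basis function `φ̂₋₁` on `[-1,1]`. -/
noncomputable def phiN (x : ℝ) : ℝ := if x ≤ 0 then (x - 1)^2 / 2 - x^2 else (x - 1)^2 / 2

/-- The spline basis function `φ̂₁` on `[-1,1]`. -/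
noncomputable def phiP (x : ℝ) : ℝ := if x ≤ 0 then (x + 1)^2 / 2 else (x + 1)^2 / 2 - x^2

/-- The spline basis function `ψ̂₋₁` on `[-1,1]`. -/
noncomputable def psiN (x : ℝ) : ℝ := if x ≤ 0 then (x - 1)^2 / 4 - x^2 else (x - 1)^2 / 4

/-- The spline basis function `ψ̂₁` on `[-1,1]`. -/
noncomputable def psiP (x : ℝ) : ℝ := if x ≤ 0 then -(x + 1)^2 / 4 else -(x + 1)^2 / 4 + x^2

/-- The quadratic Lagrange basis function `ℓ̂₋₁` on `[-1,1]`. -/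
noncomputable def lagN (x : ℝ) : ℝ := x * (x - 1) / 2

/-- The quadratic Lagrange basis function `ℓ̂₀` on `[-1,1]`. -/
noncomputable def lagO (x : ℝ) : ℝ := -((x + 1) * (x - 1))

/-- The quadratic Lagrange basis function `ℓ̂₁` on `[-1,1]`. -/
noncomputable def lagP (x : ℝ) : ℝ := (x + 1) * x / 2

/-- The anisotropic macro-element interpolation operator `Π̂ʸ` on `Λ = [-1,1]²`:
`P₂` Lagrange interpolation in `x` tensorized with `C¹-P₂` macro interpolation in `y`. -/
noncomputable def PiY (u : ℝ × ℝ → ℝ) : ℝ × ℝ → ℝ := fun z =>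
    u (-1, -1) * lagN z.1 * phiN z.2 + u (0, -1) * lagO z.1 * phiN z.2
  + u (1, -1) * lagP z.1 * phiN z.2
  + u (-1, 1) * lagN z.1 * phiP z.2 + u (0, 1) * lagO z.1 * phiP z.2
  + u (1, 1) * lagP z.1 * phiP z.2
  + pdy u (-1, -1) * lagN z.1 * psiN z.2 + pdy u (0, -1) * lagO z.1 * psiN z.2
  + pdy u (1, -1) * lagP z.1 * psiN z.2
  + pdy u (-1, 1) * lagN z.1 * psiP z.2 + pdy u (0, 1) * lagO z.1 * psiP z.2
  + pdy u (1, 1) * lagP z.1 * psiP z.2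

/-- The anisotropic macro-element interpolation operator `Πʸ` on the macro-element
`M = [x₀-h_x, x₀+h_x] × [y₀-h_y, y₀+h_y]`, obtained from `Π̂ʸ` by the affine reference
mapping `F_M`. -/
noncomputable def PiYW (x₀ y₀ hx hy : ℝ) (u : ℝ × ℝ → ℝ) : ℝ × ℝ → ℝ := fun z =>
  PiY (fun w => u (x₀ + hx * w.1, y₀ + hy * w.2)) ((z.1 - x₀) / hx, (z.2 - y₀) / hy)

open Set

lemma deriv_comp_const_add_mul (f : ℝ → ℝ) (a b t : ℝ) :
    deriv (fun s => f (a + b * s)) t = b * deriv f (a + b * t) := by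
  have h := deriv_comp_mul_left b (fun r => f (a + r)) t
  simp only [smul_eq_mul, deriv_comp_const_add] at h
  exact h

lemma pdy_comp_affine (u : ℝ × ℝ → ℝ) (x₀ y₀ hx hy : ℝ) (q : ℝ × ℝ) :
    pdy (fun w => u (x₀ + hx * w.1, y₀ + hy * w.2)) q =
      hy * pdy u (x₀ + hx * q.1, y₀ + hy * q.2) :=
  deriv_comp_const_add_mul (fun t => u (x₀ + hx * q.1, t)) y₀ hy q.2

lemma pdy_eq_fderiv_apply {u : ℝ × ℝ → ℝ} {q : ℝ × ℝ} (hu : DifferentiableAt ℝ u q) :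
    pdy u q = fderiv ℝ u q (0, 1) :=
  (hu.hasFDerivAt.comp_hasDerivAt q.2 ((hasDerivAt_const q.2 q.1).prodMk (hasDerivAt_id q.2))).deriv

lemma ContDiffOn.continuousOn_pdy {u : ℝ × ℝ → ℝ} {U : Set (ℝ × ℝ)}
    (hu : ContDiffOn ℝ 1 u U) (hU : IsOpen U) : ContinuousOn (pdy u) U :=
  ((hu.continuousOn_fderiv_of_isOpen hU le_rfl).clm_apply continuousOn_const).congr fun _ hq =>
    pdy_eq_fderiv_apply ((hu.contDiffAt (hU.mem_nhds hq)).differentiableAt one_ne_zero)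

lemma biSup_le_of_nonneg {α : Type*} {M : Set α} {g : α → ℝ} {B : ℝ} (hB : 0 ≤ B)
    (h : ∀ z ∈ M, g z ≤ B) : (⨆ z ∈ M, g z) ≤ B :=
  Real.iSup_le (fun z => Real.iSup_le (h z) hB) hB

lemma biSup_abs_nonneg {α : Type*} (M : Set α) (f : α → ℝ) : 0 ≤ ⨆ z ∈ M, |f z| :=
  Real.iSup_nonneg fun _ => Real.iSup_nonneg fun _ => abs_nonneg _

lemma IsCompact.abs_le_biSup_abs {α : Type*} [TopologicalSpace α] {M : Set α} {f : α → ℝ}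
    (hM : IsCompact M) (hf : ContinuousOn f M) {p : α} (hp : p ∈ M) :
    |f p| ≤ ⨆ z ∈ M, |f z| := by
  obtain ⟨C, hC⟩ := hM.exists_bound_of_continuousOn hf
  refine le_ciSup₂ (f := fun z (_ : z ∈ M) => |f z|) ⟨C, ?_⟩ p hp
  rintro _ ⟨_, ⟨z, rfl⟩, ⟨hz, rfl⟩⟩
  exact hC z hz

lemma mem_Icc_iff_div_mem_Icc {c h : ℝ} (hh : 0 < h) (x : ℝ) :
    x ∈ Icc (c - h) (c + h) ↔ (x - c) / h ∈ Icc (-1) 1 := by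
  simp only [mem_Icc, le_div_iff₀ hh, div_le_iff₀ hh]
  constructor <;> rintro ⟨h₁, h₂⟩ <;> constructor <;> linarith

lemma mem_Lam_iff {z : ℝ × ℝ} : z ∈ Lam ↔ z.1 ∈ Icc (-1) 1 ∧ z.2 ∈ Icc (-1) 1 := by
  rw [Lam, Icc_prod_eq, mem_prod]

lemma mem_box_iff {x₀ y₀ hx hy : ℝ} (hhx : 0 < hx) (hhy : 0 < hy) {z : ℝ × ℝ} :
    z ∈ Icc (x₀ - hx, y₀ - hy) (x₀ + hx, y₀ + hy) ↔ ((z.1 - x₀) / hx, (z.2 - y₀) / hy) ∈ Lam := by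
  rw [mem_Lam_iff, Icc_prod_eq, mem_prod, mem_Icc_iff_div_mem_Icc hhx, mem_Icc_iff_div_mem_Icc hhy]

lemma affine_mem_box {x₀ y₀ hx hy : ℝ} (hhx : 0 < hx) (hhy : 0 < hy) {w : ℝ × ℝ} (hw : w ∈ Lam) :
    (x₀ + hx * w.1, y₀ + hy * w.2) ∈ Icc (x₀ - hx, y₀ - hy) (x₀ + hx, y₀ + hy) := by
  rwa [mem_box_iff hhx hhy, add_sub_cancel_left, add_sub_cancel_left,
    mul_div_cancel_left₀ _ hhx.ne', mul_div_cancel_left₀ _ hhy.ne']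

lemma abs_lagN_le_one {x : ℝ} (hx : x ∈ Icc (-1) 1) : |lagN x| ≤ 1 := by
  obtain ⟨h₁, h₂⟩ := hx
  rw [lagN, abs_le]
  constructor <;> nlinarith

lemma abs_lagO_le_one {x : ℝ} (hx : x ∈ Icc (-1) 1) : |lagO x| ≤ 1 := by
  obtain ⟨h₁, h₂⟩ := hx
  rw [lagO, abs_le]
  constructor <;> nlinarith [sq_nonneg x]

lemma abs_lagP_le_one {x : ℝ} (hx : x ∈ Icc (-1) 1) : |lagP x| ≤ 1 := by
  obtain ⟨h₁, h₂⟩ := hx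
  rw [lagP, abs_le]
  constructor <;> nlinarith

lemma abs_phiN_le_one {x : ℝ} (hx : x ∈ Icc (-1) 1) : |phiN x| ≤ 1 := by
  obtain ⟨h₁, h₂⟩ := hx
  unfold phiN
  split_ifs <;> rw [abs_le] <;> constructor <;> nlinarith

lemma abs_phiP_le_one {x : ℝ} (hx : x ∈ Icc (-1) 1) : |phiP x| ≤ 1 := by
  obtain ⟨h₁, h₂⟩ := hx
  unfold phiP
  split_ifs <;> rw [abs_le] <;> constructor <;> nlinarith

lemma abs_psiN_le_one {x : ℝ} (hx : x ∈ Icc (-1) 1) : |psiN x| ≤ 1 := by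
  obtain ⟨h₁, h₂⟩ := hx
  unfold psiN
  split_ifs <;> rw [abs_le] <;> constructor <;> nlinarith

lemma abs_psiP_le_one {x : ℝ} (hx : x ∈ Icc (-1) 1) : |psiP x| ≤ 1 := by
  obtain ⟨h₁, h₂⟩ := hx
  unfold psiP
  split_ifs <;> rw [abs_le] <;> constructor <;> nlinarith

noncomputable def lagInterp (a b c x : ℝ) : ℝ := a * lagN x + b * lagO x + c * lagP x

lemma abs_mul_le_of_abs_le_one {a l K : ℝ} (ha : |a| ≤ K) (hl : |l| ≤ 1) : |a * l| ≤ K :=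
  (abs_mul a l).trans_le ((mul_le_of_le_one_right (abs_nonneg a) hl).trans ha)

lemma abs_lagInterp_le {a b c K x : ℝ} (ha : |a| ≤ K) (hb : |b| ≤ K) (hc : |c| ≤ K)
    (hx : x ∈ Icc (-1) 1) : |lagInterp a b c x| ≤ 3 * K :=
  calc |lagInterp a b c x| ≤ |a * lagN x| + |b * lagO x| + |c * lagP x| := abs_add_three _ _ _
    _ ≤ K + K + K := by
      gcongr
      exacts [abs_mul_le_of_abs_le_one ha (abs_lagN_le_one hx),
        abs_mul_le_of_abs_le_one hb (abs_lagO_le_one hx),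
        abs_mul_le_of_abs_le_one hc (abs_lagP_le_one hx)]
    _ = 3 * K := by ring

lemma PiY_eq_lagInterp (v : ℝ × ℝ → ℝ) (z : ℝ × ℝ) :
    PiY v z =
      lagInterp (v (-1, -1)) (v (0, -1)) (v (1, -1)) z.1 * phiN z.2
      + lagInterp (v (-1, 1)) (v (0, 1)) (v (1, 1)) z.1 * phiP z.2
      + lagInterp (pdy v (-1, -1)) (pdy v (0, -1)) (pdy v (1, -1)) z.1 * psiN z.2
      + lagInterp (pdy v (-1, 1)) (pdy v (0, 1)) (pdy v (1, 1)) z.1 * psiP z.2 := by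
  simp only [PiY, lagInterp]
  ring

lemma abs_PiY_le {v : ℝ × ℝ → ℝ} {A B : ℝ} (hv : ∀ w ∈ Lam, |v w| ≤ A)
    (hdv : ∀ w ∈ Lam, |pdy v w| ≤ B) {z : ℝ × ℝ} (hz : z ∈ Lam) :
    |PiY v z| ≤ 6 * (A + B) := by
  obtain ⟨hz₁, hz₂⟩ := mem_Lam_iff.1 hz
  have hnode : ∀ i ∈ Icc (-1 : ℝ) 1, ∀ j ∈ Icc (-1 : ℝ) 1, (i, j) ∈ Lam :=
    fun i hi j hj => mem_Lam_iff.2 ⟨hi, hj⟩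
  have hrow : ∀ (f : ℝ × ℝ → ℝ) (K : ℝ), (∀ w ∈ Lam, |f w| ≤ K) → ∀ j ∈ Icc (-1 : ℝ) 1,
      ∀ p : ℝ, |p| ≤ 1 → |lagInterp (f (-1, j)) (f (0, j)) (f (1, j)) z.1 * p| ≤ 3 * K :=
    fun f K hf j hj p hp => abs_mul_le_of_abs_le_one
      (abs_lagInterp_le (hf _ (hnode _ (by norm_num) j hj)) (hf _ (hnode _ (by norm_num) j hj))
        (hf _ (hnode _ (by norm_num) j hj)) hz₁) hp
  have h₁ := abs_le.1 (hrow v A hv (-1) (by norm_num) _ (abs_phiN_le_one hz₂))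
  have h₂ := abs_le.1 (hrow v A hv 1 (by norm_num) _ (abs_phiP_le_one hz₂))
  have h₃ := abs_le.1 (hrow (pdy v) B hdv (-1) (by norm_num) _ (abs_psiN_le_one hz₂))
  have h₄ := abs_le.1 (hrow (pdy v) B hdv 1 (by norm_num) _ (abs_psiP_le_one hz₂))
  rw [PiY_eq_lagInterp, abs_le]
  constructor <;> linarith

/-- `L∞`-stability of `Πʸ` on the macro-element
`M = [x₀-h_x, x₀+h_x] × [y₀-h_y, y₀+h_y]`:
`sup_M |Πʸu| ≤ C (sup_M |u| + h_y sup_M |∂_y u|)`. -/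
theorem piy_world_linfty_stability :
    ∃ C : ℝ, 0 < C ∧
      ∀ (x₀ y₀ hx hy : ℝ), 0 < hx → 0 < hy →
      ∀ (u : ℝ × ℝ → ℝ) (U : Set (ℝ × ℝ)), IsOpen U →
        Set.Icc (x₀ - hx, y₀ - hy) (x₀ + hx, y₀ + hy) ⊆ U →
        ContDiffOn ℝ 1 u U →
        (⨆ z ∈ Set.Icc (x₀ - hx, y₀ - hy) (x₀ + hx, y₀ + hy), |PiYW x₀ y₀ hx hy u z|) ≤
          C * ((⨆ z ∈ Set.Icc (x₀ - hx, y₀ - hy) (x₀ + hx, y₀ + hy), |u z|) +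
            hy * ⨆ z ∈ Set.Icc (x₀ - hx, y₀ - hy) (x₀ + hx, y₀ + hy), |pdy u z|) := by
  refine ⟨6, by norm_num, fun x₀ y₀ hx hy hhx hhy u U hU hMU hu => ?_⟩
  have hM : IsCompact (Icc (x₀ - hx, y₀ - hy) (x₀ + hx, y₀ + hy)) := isCompact_Icc
  have hS := biSup_abs_nonneg (Icc (x₀ - hx, y₀ - hy) (x₀ + hx, y₀ + hy)) u
  have hT := biSup_abs_nonneg (Icc (x₀ - hx, y₀ - hy) (x₀ + hx, y₀ + hy)) (pdy u)
  refine biSup_le_of_nonneg (by positivity) fun z hz => ?_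
  refine abs_PiY_le (fun w hw => ?_) (fun w hw => ?_) ((mem_box_iff hhx hhy).1 hz)
  · exact hM.abs_le_biSup_abs (hu.continuousOn.mono hMU) (affine_mem_box hhx hhy hw)
  · rw [pdy_comp_affine, abs_mul, abs_of_pos hhy]
    exact mul_le_mul_of_nonneg_left (hM.abs_le_biSup_abs ((hu.continuousOn_pdy hU).mono hMU)
      (affine_mem_box hhx hhy hw)) hhy.le
end

section
/- Let p ∈ [1,∞), let T := [a₁,b₁] × [a₂,b₂] be an axis-aligned rectangle with h_x := b₁ - a₁ > 0, and let v be of class C¹ on an open neighbourhood of T. Then ∫_{a₂}^{b₂} ( |v(a₁,y)|^p + |v(b₁,y)|^p ) dy ≤ p · ‖v‖_{Lp(T)}^{p-1} · ‖∂_x v‖_{Lp(T)} + (2/h_x) · ‖v‖_{Lp(T)}^p. -/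
open MeasureTheory
open scoped ENNReal

/-!
On a segment `[c, d]`, `|f|^p` varies by at most `p ∫ |f|^(p-1) |f'|` (for `p > 1` by the chain
rule for `|·|^p`, for `p = 1` by the reverse triangle inequality). Comparing both endpoints with a
point where `|f|^p` does not exceed its mean gives
`|f c|^p + |f d|^p ≤ 2/(d-c) ∫ |f|^p + p ∫ |f|^(p-1) |f'|`. Apply this on every horizontal
segment of the rectangle, integrate in `y` (Fubini), and bound the last term by Hölder's
inequality with exponents `p/(p-1)` and `p`.
-/

open Set

theorem abs_abs_rpow_sub_abs_rpow_le {p : ℝ} (hp : 1 ≤ p) {f f' : ℝ → ℝ} {c d : ℝ}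
    (hcd : c ≤ d) (hf : ∀ t ∈ Icc c d, HasDerivAt f (f' t) t)
    (hf' : ContinuousOn f' (Icc c d)) :
    |(|f d| ^ p - |f c| ^ p)| ≤ p * ∫ t in c..d, |f t| ^ (p - 1) * |f' t| := by
  have hfc : ContinuousOn f (Icc c d) := fun t ht => (hf t ht).continuousAt.continuousWithinAt
  have hderiv : ∀ t ∈ Ioo c d, deriv f t = f' t := fun t ht => (hf t (Ioo_subset_Icc_self ht)).deriv
  have hdiff : DifferentiableOn ℝ f (Ioo c d) :=
    fun t ht => (hf t (Ioo_subset_Icc_self ht)).differentiableAt.differentiableWithinAt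
  rcases hp.eq_or_lt with rfl | hp
  · simp only [Real.rpow_one, sub_self, Real.rpow_zero, one_mul]
    calc |(|f d| - |f c|)| ≤ ‖f d - f c‖ := abs_abs_sub_abs_le_abs_sub _ _
      _ ≤ ∫ t in c..d, |f' t| := by
        refine norm_sub_le_integral_of_norm_deriv_le_of_le hcd hfc hdiff
          (ae_of_all _ fun t ht => ?_) (hf'.abs.intervalIntegrable_of_Icc hcd)
        rw [hderiv t ht, Real.norm_eq_abs]
  · have hG : ∀ t ∈ Icc c d,
        HasDerivAt (fun t => |f t| ^ p) (p * |f t| ^ (p - 2) * f t * f' t) t :=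
      fun t ht => (hasDerivAt_abs_rpow (f t) hp).comp t (hf t ht)
    have habs_deriv :
        ∀ t, |p * |f t| ^ (p - 2) * f t * f' t| = p * (|f t| ^ (p - 1) * |f' t|) := by
      intro t
      have : |f t| ^ (p - 2) * |f t| = |f t| ^ (p - 1) := by
        conv_lhs => enter [2]; rw [← Real.rpow_one |f t|]
        rw [← Real.rpow_add' (abs_nonneg _) (by linarith)]
        ring_nf
      rw [abs_mul, abs_mul, abs_mul, abs_of_pos (by linarith : 0 < p),
        abs_of_nonneg (Real.rpow_nonneg (abs_nonneg _) _), mul_assoc p, this, mul_assoc]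
    rw [← intervalIntegral.integral_const_mul, ← Real.norm_eq_abs]
    refine norm_sub_le_integral_of_norm_deriv_le_of_le hcd
      (fun t ht => (hG t ht).continuousAt.continuousWithinAt)
      (fun t ht => (hG t (Ioo_subset_Icc_self ht)).differentiableAt.differentiableWithinAt)
      (ae_of_all _ fun t ht => ?_) ?_
    · rw [(hG t (Ioo_subset_Icc_self ht)).deriv, Real.norm_eq_abs, habs_deriv]
    · refine ContinuousOn.intervalIntegrable_of_Icc hcd ?_
      exact continuousOn_const.mul
        ((hfc.abs.rpow_const fun _ _ => Or.inr (by linarith)).mul hf'.abs)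

theorem abs_rpow_add_abs_rpow_le {p : ℝ} (hp : 1 ≤ p) {f f' : ℝ → ℝ} {c d : ℝ}
    (hcd : c < d) (hf : ∀ t ∈ Icc c d, HasDerivAt f (f' t) t)
    (hf' : ContinuousOn f' (Icc c d)) :
    |f c| ^ p + |f d| ^ p ≤ 2 / (d - c) * (∫ t in Icc c d, |f t| ^ p)
      + p * ∫ t in Icc c d, |f t| ^ (p - 1) * |f' t| := by
  have hfc : ContinuousOn f (Icc c d) := fun t ht => (hf t ht).continuousAt.continuousWithinAt
  set φ : ℝ → ℝ := fun t => |f t| ^ (p - 1) * |f' t|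
  have hφ : ContinuousOn φ (Icc c d) :=
    (hfc.abs.rpow_const fun _ _ => Or.inr (by linarith)).mul hf'.abs
  obtain ⟨x, hx, hx_avg⟩ := exists_le_setAverage (μ := volume) (f := fun t => |f t| ^ p)
    (by simp [hcd]) (by simp)
    ((hfc.abs.rpow_const fun _ _ => Or.inr (by linarith)).integrableOn_Icc)
  have hleft : |f c| ^ p ≤ |f x| ^ p + p * ∫ t in c..x, φ t := by
    have := abs_abs_rpow_sub_abs_rpow_le hp hx.1 (fun t ht => hf t ⟨ht.1, ht.2.trans hx.2⟩)
      (hf'.mono (Icc_subset_Icc le_rfl hx.2))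
    linarith [neg_abs_le (|f x| ^ p - |f c| ^ p)]
  have hright : |f d| ^ p ≤ |f x| ^ p + p * ∫ t in x..d, φ t := by
    have := abs_abs_rpow_sub_abs_rpow_le hp hx.2 (fun t ht => hf t ⟨hx.1.trans ht.1, ht.2⟩)
      (hf'.mono (Icc_subset_Icc hx.1 le_rfl))
    linarith [le_abs_self (|f d| ^ p - |f x| ^ p)]
  have hsplit : (∫ t in c..x, φ t) + ∫ t in x..d, φ t = ∫ t in Icc c d, φ t := by
    rw [intervalIntegral.integral_add_adjacent_intervals
      ((hφ.mono (Icc_subset_Icc le_rfl hx.2)).intervalIntegrable_of_Icc hx.1)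
      ((hφ.mono (Icc_subset_Icc hx.1 le_rfl)).intervalIntegrable_of_Icc hx.2),
      intervalIntegral.integral_of_le hcd.le, integral_Icc_eq_integral_Ioc]
  have havg : 2 / (d - c) * ∫ t in Icc c d, |f t| ^ p = 2 * ⨍ t in Icc c d, |f t| ^ p := by
    rw [setAverage_eq, smul_eq_mul, Real.volume_real_Icc_of_le hcd.le]
    ring
  rw [havg, ← hsplit, mul_add]
  linarith

namespace MeasureTheory

variable {α β E : Type*} [MeasurableSpace α] [MeasurableSpace β] {μ : Measure α} {ν : Measure β}
  [SFinite μ] [SFinite ν] [NormedAddCommGroup E] [NormedSpace ℝ E] {f : α × β → E}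
  {s : Set α} {t : Set β}

theorem setIntegral_prod_symm (hf : IntegrableOn f (s ×ˢ t) (μ.prod ν)) :
    ∫ z in s ×ˢ t, f z ∂μ.prod ν = ∫ y in t, ∫ x in s, f (x, y) ∂μ ∂ν := by
  rw [IntegrableOn, ← Measure.prod_restrict] at hf
  rw [← Measure.prod_restrict, integral_prod_symm f hf]

theorem IntegrableOn.setIntegral_prod_right (hf : IntegrableOn f (s ×ˢ t) (μ.prod ν)) :
    IntegrableOn (fun y => ∫ x in s, f (x, y) ∂μ) t ν := by
  rw [IntegrableOn, ← Measure.prod_restrict] at hf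
  exact hf.integral_prod_right

end MeasureTheory

theorem integral_abs_rpow_sub_one_mul_abs_le {α : Type*} [MeasurableSpace α] {μ : Measure α}
    {p : ℝ} (hp : 1 ≤ p) {u w : α → ℝ} (hu : MemLp u (ENNReal.ofReal p) μ)
    (hw : MemLp w (ENNReal.ofReal p) μ) :
    ∫ z, |u z| ^ (p - 1) * |w z| ∂μ
      ≤ (∫ z, |u z| ^ p ∂μ) ^ ((p - 1) / p) * (∫ z, |w z| ^ p ∂μ) ^ (1 / p) := by
  rcases hp.eq_or_lt with rfl | hp
  · simp
  have hpq : (Real.conjExponent p).HolderConjugate p := (Real.HolderConjugate.conjExponent hp).symm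
  have hu' : MemLp (fun z => |u z| ^ (p - 1)) (ENNReal.ofReal (Real.conjExponent p)) μ := by
    have := hu.norm_rpow_div (ENNReal.ofReal (p - 1))
    rwa [ENNReal.toReal_ofReal (by linarith), ← ENNReal.ofReal_div_of_pos (by linarith)] at this
  have h := integral_mul_norm_le_Lp_mul_Lq hpq hu' hw
  have hconj : ∀ z, (|u z| ^ (p - 1)) ^ (p / (p - 1)) = |u z| ^ p := fun z => by
    rw [← Real.rpow_mul (abs_nonneg _)]
    congr 1
    field_simp
  simpa [abs_of_nonneg (Real.rpow_nonneg (abs_nonneg _) _), hconj, Real.conjExponent,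
    one_div_div] using h

theorem integral_abs_rpow_vertical_edges_le {p : ℝ} (hp : 1 ≤ p) {a₁ b₁ a₂ b₂ : ℝ}
    (hab : a₁ < b₁) {v v' : ℝ × ℝ → ℝ} (hv : ContinuousOn v (Icc a₁ b₁ ×ˢ Icc a₂ b₂))
    (hv' : ContinuousOn v' (Icc a₁ b₁ ×ˢ Icc a₂ b₂))
    (hderiv : ∀ z ∈ Icc a₁ b₁ ×ˢ Icc a₂ b₂, HasDerivAt (fun t => v (t, z.2)) (v' z) z.1) :
    ∫ y in Icc a₂ b₂, (|v (a₁, y)| ^ p + |v (b₁, y)| ^ p)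
      ≤ 2 / (b₁ - a₁) * (∫ z in Icc a₁ b₁ ×ˢ Icc a₂ b₂, |v z| ^ p)
        + p * ∫ z in Icc a₁ b₁ ×ˢ Icc a₂ b₂, |v z| ^ (p - 1) * |v' z| := by
  have hK : IsCompact (Icc a₁ b₁ ×ˢ Icc a₂ b₂) := isCompact_Icc.prod isCompact_Icc
  have hI₁ : IntegrableOn (fun z => |v z| ^ p) (Icc a₁ b₁ ×ˢ Icc a₂ b₂) (volume.prod volume) :=
    (hv.abs.rpow_const fun _ _ => Or.inr (by linarith)).integrableOn_compact hK
  have hI₂ : IntegrableOn (fun z => |v z| ^ (p - 1) * |v' z|) (Icc a₁ b₁ ×ˢ Icc a₂ b₂)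
      (volume.prod volume) :=
    ((hv.abs.rpow_const fun _ _ => Or.inr (by linarith)).mul hv'.abs).integrableOn_compact hK
  have hline : ∀ y ∈ Icc a₂ b₂, |v (a₁, y)| ^ p + |v (b₁, y)| ^ p ≤
      2 / (b₁ - a₁) * (∫ x in Icc a₁ b₁, |v (x, y)| ^ p)
        + p * ∫ x in Icc a₁ b₁, |v (x, y)| ^ (p - 1) * |v' (x, y)| := fun y hy =>
    abs_rpow_add_abs_rpow_le (f := fun x => v (x, y)) (f' := fun x => v' (x, y)) hp hab
      (fun x hx => hderiv (x, y) ⟨hx, hy⟩)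
      (hv'.comp (continuous_id.prodMk continuous_const).continuousOn fun x hx => ⟨hx, hy⟩)
  calc ∫ y in Icc a₂ b₂, (|v (a₁, y)| ^ p + |v (b₁, y)| ^ p)
      ≤ ∫ y in Icc a₂ b₂, (2 / (b₁ - a₁) * (∫ x in Icc a₁ b₁, |v (x, y)| ^ p)
          + p * ∫ x in Icc a₁ b₁, |v (x, y)| ^ (p - 1) * |v' (x, y)|) :=
        integral_mono_of_nonneg (ae_of_all _ fun y => by positivity)
          ((hI₁.setIntegral_prod_right.const_mul _).add (hI₂.setIntegral_prod_right.const_mul _))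
          (ae_restrict_of_forall_mem measurableSet_Icc hline)
    _ = _ := by
        rw [integral_add (hI₁.setIntegral_prod_right.const_mul _)
          (hI₂.setIntegral_prod_right.const_mul _), integral_const_mul, integral_const_mul,
          Measure.volume_eq_prod, setIntegral_prod_symm hI₁, setIntegral_prod_symm hI₂]

theorem hasDerivAt_horizontal_slice {v : ℝ × ℝ → ℝ} {q : ℝ × ℝ} (hv : DifferentiableAt ℝ v q) :
    HasDerivAt (fun t => v (t, q.2)) (fderiv ℝ v q (1, 0)) q.1 :=
  hv.hasFDerivAt.comp_hasDerivAt q.1 ((hasDerivAt_id _).prodMk (hasDerivAt_const _ _))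

theorem pdx_eq_fderiv_apply {v : ℝ × ℝ → ℝ} {q : ℝ × ℝ} (hv : DifferentiableAt ℝ v q) :
    pdx v q = fderiv ℝ v q (1, 0) :=
  (hasDerivAt_horizontal_slice hv).deriv

theorem hasDerivAt_pdx {v : ℝ × ℝ → ℝ} {q : ℝ × ℝ} (hv : DifferentiableAt ℝ v q) :
    HasDerivAt (fun t => v (t, q.2)) (pdx v q) q.1 :=
  pdx_eq_fderiv_apply hv ▸ hasDerivAt_horizontal_slice hv

theorem continuousOn_pdx {v : ℝ × ℝ → ℝ} {U : Set (ℝ × ℝ)} (hU : IsOpen U)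
    (hv : ContDiffOn ℝ 1 v U) : ContinuousOn (pdx v) U := by
  refine (((ContinuousLinearMap.apply ℝ ℝ ((1 : ℝ), (0 : ℝ))).continuous.comp_continuousOn
    (hv.continuousOn_fderiv_of_isOpen hU le_rfl))).congr fun q hq => ?_
  exact pdx_eq_fderiv_apply ((hv.differentiableOn one_ne_zero).differentiableAt (hU.mem_nhds hq))

theorem ContinuousOn.memLp_restrict_of_isCompact {X E : Type*} [TopologicalSpace X]
    [MeasurableSpace X] [OpensMeasurableSpace X] {μ : Measure X} [IsFiniteMeasureOnCompacts μ]
    [NormedAddCommGroup E] {K : Set X} (hK : IsCompact K) (hKm : MeasurableSet K) {g : X → E}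
    (hg : ContinuousOn g K) (q : ℝ≥0∞) : MemLp g q (μ.restrict K) := by
  have : IsFiniteMeasure (μ.restrict K) := isFiniteMeasure_restrict.2 hK.measure_lt_top.ne
  obtain ⟨C, hC⟩ := hK.exists_bound_of_continuousOn hg
  exact MemLp.of_bound (hg.aestronglyMeasurable_of_isCompact hK hKm) C
    (ae_restrict_of_forall_mem hKm hC)

theorem anisotropic_multiplicative_trace_general (p : ℝ) (hp : 1 ≤ p)
    (a₁ b₁ a₂ b₂ : ℝ) (hx : 0 < b₁ - a₁)
    (v : ℝ × ℝ → ℝ) (U : Set (ℝ × ℝ)) (hU : IsOpen U)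
    (hT : Set.Icc (a₁, a₂) (b₁, b₂) ⊆ U) (hv : ContDiffOn ℝ 1 v U) :
    (∫ y in Set.Icc a₂ b₂, (|v (a₁, y)| ^ p + |v (b₁, y)| ^ p)) ≤
      p * (∫ z in Set.Icc (a₁, a₂) (b₁, b₂), |v z| ^ p) ^ ((p - 1) / p) *
          (∫ z in Set.Icc (a₁, a₂) (b₁, b₂), |pdx v z| ^ p) ^ (1 / p) +
        (2 / (b₁ - a₁)) * ∫ z in Set.Icc (a₁, a₂) (b₁, b₂), |v z| ^ p := by
  have hTprod : Icc (a₁, a₂) (b₁, b₂) = Icc a₁ b₁ ×ˢ Icc a₂ b₂ := Icc_prod_eq _ _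
  rw [hTprod] at hT ⊢
  have hK : IsCompact (Icc a₁ b₁ ×ˢ Icc a₂ b₂) := isCompact_Icc.prod isCompact_Icc
  have hKm : MeasurableSet (Icc a₁ b₁ ×ˢ Icc a₂ b₂) := measurableSet_Icc.prod measurableSet_Icc
  have hvT : ContinuousOn v (Icc a₁ b₁ ×ˢ Icc a₂ b₂) := hv.continuousOn.mono hT
  have hdvT : ContinuousOn (pdx v) (Icc a₁ b₁ ×ˢ Icc a₂ b₂) := (continuousOn_pdx hU hv).mono hT
  have hderiv (z) (hz : z ∈ Icc a₁ b₁ ×ˢ Icc a₂ b₂) :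
      HasDerivAt (fun t => v (t, z.2)) (pdx v z) z.1 :=
    hasDerivAt_pdx ((hv.differentiableOn one_ne_zero).differentiableAt (hU.mem_nhds (hT hz)))
  calc _ ≤ 2 / (b₁ - a₁) * (∫ z in Icc a₁ b₁ ×ˢ Icc a₂ b₂, |v z| ^ p)
        + p * ∫ z in Icc a₁ b₁ ×ˢ Icc a₂ b₂, |v z| ^ (p - 1) * |pdx v z| :=
        integral_abs_rpow_vertical_edges_le hp (by linarith) hvT hdvT hderiv
    _ ≤ 2 / (b₁ - a₁) * (∫ z in Icc a₁ b₁ ×ˢ Icc a₂ b₂, |v z| ^ p)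
        + p * ((∫ z in Icc a₁ b₁ ×ˢ Icc a₂ b₂, |v z| ^ p) ^ ((p - 1) / p)
          * (∫ z in Icc a₁ b₁ ×ˢ Icc a₂ b₂, |pdx v z| ^ p) ^ (1 / p)) := by
        gcongr
        exact integral_abs_rpow_sub_one_mul_abs_le hp (hvT.memLp_restrict_of_isCompact hK hKm _)
          (hdvT.memLp_restrict_of_isCompact hK hKm _)
    _ = _ := by ring

/-- anisotropic multiplicative trace inequality on the axis-aligned
rectangle `T = [a₁,b₁] × [a₂,b₂]` for the two edges parallel to the `y`-axis. -/
theorem anisotropic_multiplicative_trace (p : ℝ) (hp : 1 ≤ p)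
    (a₁ b₁ a₂ b₂ : ℝ) (hx : 0 < b₁ - a₁) (hy : a₂ ≤ b₂)
    (v : ℝ × ℝ → ℝ) (U : Set (ℝ × ℝ)) (hU : IsOpen U)
    (hT : Set.Icc (a₁, a₂) (b₁, b₂) ⊆ U) (hv : ContDiffOn ℝ 1 v U) :
    (∫ y in Set.Icc a₂ b₂, (|v (a₁, y)| ^ p + |v (b₁, y)| ^ p)) ≤
      p * (∫ z in Set.Icc (a₁, a₂) (b₁, b₂), |v z| ^ p) ^ ((p - 1) / p) *
          (∫ z in Set.Icc (a₁, a₂) (b₁, b₂), |pdx v z| ^ p) ^ (1 / p) +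
        (2 / (b₁ - a₁)) * ∫ z in Set.Icc (a₁, a₂) (b₁, b₂), |v z| ^ p :=
  anisotropic_multiplicative_trace_general p hp a₁ b₁ a₂ b₂ hx v U hU hT hv
end
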